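/- arXiv:math/0610623 — 2 statements merged into one kernel-verified Lean document; each statement's English description precedes it below -/
import Mathlib

section
/- Assume f is curved. Let u^c ∈ ∂C(0) be such that all coordinates of u^c outside J(u^c) vanish (i.e. u^c = Σ_{j∈J(u^c)} u^c_j ψ_j with u^c_j = ±τ/2), and let τ' > 0. Then the map h'(u, λ) = u^c + λ(u − u^c) is a well-defined bijection from SSAT({u^c},{1}) × (0, τ'] onto SSAT({u^c},(0, τ']), and h' is Lipschitz. -/
/-!
Strict convexity of the unit ball of `f` makes the closest point of `C(0)` unique, and if `u^c`
is the closest point to `u` it remains the closest point to every `u^c + λ • (u - u^c)`, `λ > 0`.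
Since `f_d` is homogeneous, `h'` therefore maps `SSAT({u^c},{1}) × (0, τ']` onto
`SSAT({u^c}, (0, τ'])`, with an explicit inverse. As `f_d` dominates a multiple of the Euclidean
norm, `SSAT({u^c},{1})` is bounded, and `(u, λ) ↦ u^c + λ • (u - u^c)` is Lipschitz on the product
of a bounded set with a bounded interval.
-/

open MeasureTheory Filter Set
open scoped Classical

noncomputable section

/-- The ambient space `ℝ^N` with the Euclidean structure. -/
abbrev Euc (N : ℕ) := EuclideanSpace ℝ (Fin N)

variable {N : ℕ}

/-- The cell `C((k_i))` : points whose coordinates in the basis `ψ` satisfy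
`τ(k_i - 1/2) ≤ u_i ≤ τ(k_i + 1/2)`. -/
def cube (ψ : Module.Basis (Fin N) ℝ (Euc N)) (τ : ℝ) (k : Fin N → ℤ) : Set (Euc N) :=
  {u | ∀ i, τ * ((k i : ℝ) - 1/2) ≤ ψ.repr u i ∧ ψ.repr u i ≤ τ * ((k i : ℝ) + 1/2)}

/-- The central cell `C(0)`. -/
def cube0 (ψ : Module.Basis (Fin N) ℝ (Euc N)) (τ : ℝ) : Set (Euc N) := cube ψ τ 0

/-- The set of active (saturated) coordinates `J(u)` for `u ∈ C(0)`. -/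
def Jset (ψ : Module.Basis (Fin N) ℝ (Euc N)) (τ : ℝ) (u : Euc N) : Set (Fin N) :=
  {i | ψ.repr u i = τ / 2 ∨ ψ.repr u i = -(τ / 2)}

/-- `sol` is the solution map of the problems `(P)(u)` : `sol u` minimizes `f(v - u)` over
`C(0)`.  (Under the hypotheses on `f` the minimizer is unique.) -/
def IsSol (ψ : Module.Basis (Fin N) ℝ (Euc N)) (τ : ℝ) (f : Euc N → ℝ) (sol : Euc N → Euc N) : Prop :=
  ∀ u, sol u ∈ cube0 ψ τ ∧ IsMinOn (fun v => f (v - u)) (cube0 ψ τ) (sol u)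

/-- `SSAT(C, A)` : the set of data `u` whose solution `sol u` lies in `C` and with
`f_d(u - sol u) ∈ A`. -/
def SSAT (sol : Euc N → Euc N) (fd : Euc N → ℝ) (C : Set (Euc N)) (A : Set ℝ) : Set (Euc N) :=
  {u | sol u ∈ C ∧ fd (u - sol u) ∈ A}

/-- `f` is a norm. -/
structure IsNormLike (f : Euc N → ℝ) : Prop where
  add_le : ∀ x y, f (x + y) ≤ f x + f y
  smul_eq : ∀ (c : ℝ) (x), f (c • x) = |c| * f x
  eq_zero_iff : ∀ x, f x = 0 ↔ x = 0

/-- `f` is a norm, continuously differentiable away from `0`, with strictly convex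
level sets. -/
structure GoodNorm (f : Euc N → ℝ) : Prop where
  add_le : ∀ x y, f (x + y) ≤ f x + f y
  smul_eq : ∀ (c : ℝ) (x), f (c • x) = |c| * f x
  eq_zero_iff : ∀ x, f x = 0 ↔ x = 0
  smooth : ∀ x : Euc N, x ≠ 0 → ContDiffAt ℝ 1 f x
  sconv : StrictConvex ℝ {x : Euc N | f x ≤ 1}

/-- `f` is curved : the normalized-gradient map `h : {f = 1} → S^{N-1}`,
`h(u) = ∇f(u)/‖∇f(u)‖₂`, is a bijection whose inverse is Lipschitz. -/
def Curved (f : Euc N → ℝ) : Prop :=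
  ∃ (L : NNReal) (g : Euc N → Euc N),
    LipschitzOnWith L g (Metric.sphere (0 : Euc N) 1) ∧
    (∀ u : Euc N, f u = 1 → g (‖gradient f u‖⁻¹ • gradient f u) = u) ∧
    ∀ w ∈ Metric.sphere (0 : Euc N) 1, ∃ u, f u = 1 ∧ ‖gradient f u‖⁻¹ • gradient f u = w

/-- The projection `p` onto `Span(ψ_j : j ∈ J)` along the other basis vectors. -/
def pJ (ψ : Module.Basis (Fin N) ℝ (Euc N)) (J : Set (Fin N)) (x : Euc N) : Euc N :=
  ∑ j : Fin N, if j ∈ J then ψ.repr x j • ψ j else 0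

/-- The "center" `u^c` of the face of `u` : keep the saturated coordinates, zero out
the others. -/
def ucOf (ψ : Module.Basis (Fin N) ℝ (Euc N)) (τ : ℝ) (u : Euc N) : Euc N :=
  pJ ψ (Jset ψ τ u) u

/-- The equivalence class `ū` of `u` in `C(0)` : same active set. -/
def ubar (ψ : Module.Basis (Fin N) ℝ (Euc N)) (τ : ℝ) (u : Euc N) : Set (Euc N) :=
  {w ∈ cube0 ψ τ | Jset ψ τ w = Jset ψ τ u}

/-- The discrete grid `D = τ ℤ^N` (in the basis `ψ`). -/
def Dgrid (ψ : Module.Basis (Fin N) ℝ (Euc N)) (τ : ℝ) : Set (Euc N) :=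
  {x | ∃ k : Fin N → ℤ, x = ∑ i, (τ * (k i : ℝ)) • ψ i}

/-- The slice `Dom((k_j)_{j∈J})` of the grid : grid points whose `J`-coordinates are
the prescribed `τ k_j`. -/
def DomSlice (ψ : Module.Basis (Fin N) ℝ (Euc N)) (τ : ℝ) (J : Set (Fin N)) (k : Fin N → ℤ) :
    Set (Euc N) :=
  {x ∈ Dgrid ψ τ | ∀ j ∈ J, ψ.repr x j = τ * (k j : ℝ)}

/-- The grid `τ ℤ^J` inside `Span(ψ_j : j ∈ J)`. -/
def JgridJ (ψ : Module.Basis (Fin N) ℝ (Euc N)) (τ : ℝ) (J : Set (Fin N)) : Set (Euc N) :=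
  {x | ∃ k : Fin N → ℤ, x = ∑ j : Fin N, if j ∈ J then (τ * (k j : ℝ)) • ψ j else 0}

/-- `Leb_K(S)` : the Lebesgue measure (in `ℝ^{#J}`) of the set of `J`-indexed coordinate
families whose combination lies in `S`. -/
def lebJ (ψ : Module.Basis (Fin N) ℝ (Euc N)) (J : Set (Fin N)) (S : Set (Euc N)) : ENNReal :=
  volume {a : ↥J → ℝ | (∑ j : ↥J, a j • ψ (j : Fin N)) ∈ S}

/-- The set `C_K` of centers of the faces of codimension `K`. -/
def CKset (ψ : Module.Basis (Fin N) ℝ (Euc N)) (τ : ℝ) (K : ℕ) : Set (Euc N) :=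
  {x | ∃ (J : Set (Fin N)) (ε : Fin N → ℝ), J.ncard = K ∧ (∀ j ∈ J, ε j = 1 ∨ ε j = -1) ∧
    x = ∑ j : Fin N, if j ∈ J then (ε j * (τ / 2)) • ψ j else 0}

/-- The set `Cl_K` of boundary points of `C(0)` with exactly `K` active constraints. -/
def ClKset (ψ : Module.Basis (Fin N) ℝ (Euc N)) (τ : ℝ) (K : ℕ) : Set (Euc N) :=
  {u | u ∈ frontier (cube0 ψ τ) ∧ (Jset ψ τ u).ncard = K}

/-- `k_i(u)` : the unique integer with `τ(k_i - 1/2) ≤ u_i < τ(k_i + 1/2)`. -/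
def kfun (ψ : Module.Basis (Fin N) ℝ (Euc N)) (τ : ℝ) (u : Euc N) (i : Fin N) : ℤ :=
  ⌊ψ.repr u i / τ + 1 / 2⌋

/-- The grid point `τ Σ k_i(u) ψ_i` approximating `u`. -/
def gridpt (ψ : Module.Basis (Fin N) ℝ (Euc N)) (τ : ℝ) (u : Euc N) : Euc N :=
  ∑ i, (τ * (kfun ψ τ u i : ℝ)) • ψ i

/-- `J̃(u)` : the active set of the solution of `(P)` at the grid point of `u`. -/
def Jtil (ψ : Module.Basis (Fin N) ℝ (Euc N)) (τ : ℝ) (sol : Euc N → Euc N) (u : Euc N) :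
    Set (Fin N) :=
  Jset ψ τ (sol (gridpt ψ τ u))

open Topology

namespace IsNormLike

variable {f : Euc N → ℝ}

lemma map_zero (hf : IsNormLike f) : f 0 = 0 :=
  (hf.eq_zero_iff 0).2 rfl

lemma map_neg (hf : IsNormLike f) (x : Euc N) : f (-x) = f x := by
  simpa using hf.smul_eq (-1) x

lemma nonneg (hf : IsNormLike f) (x : Euc N) : 0 ≤ f x := by
  have h := hf.add_le x (-x)
  rw [add_neg_cancel, hf.map_zero, hf.map_neg] at h
  linarith

lemma smul_of_nonneg (hf : IsNormLike f) {t : ℝ} (ht : 0 ≤ t) (x : Euc N) :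
    f (t • x) = t * f x := by
  rw [hf.smul_eq, abs_of_nonneg ht]

lemma continuous (hf : IsNormLike f) : Continuous f := by
  have hconv : ConvexOn ℝ univ f := by
    refine ⟨convex_univ, fun x _ y _ a b ha hb _ => ?_⟩
    calc f (a • x + b • y) ≤ f (a • x) + f (b • y) := hf.add_le _ _
      _ = a * f x + b * f y := by rw [hf.smul_of_nonneg ha, hf.smul_of_nonneg hb]
  exact continuousOn_univ.1 (hconv.continuousOn isOpen_univ)

/-- The minimum of `f` on the Euclidean unit sphere gives the constant. -/
lemma exists_pos_mul_norm_le (hf : IsNormLike f) : ∃ c : ℝ, 0 < c ∧ ∀ x, c * ‖x‖ ≤ f x := by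
  by_cases hS : (Metric.sphere (0 : Euc N) 1).Nonempty
  swap
  · refine ⟨1, one_pos, fun x => ?_⟩
    obtain rfl : x = 0 := by
      by_contra hx
      exact hS ⟨‖x‖⁻¹ • x, by simp [norm_smul, hx]⟩
    simp [hf.map_zero]
  obtain ⟨x₀, hx₀, hmin⟩ :=
    (isCompact_sphere (0 : Euc N) 1).exists_isMinOn hS hf.continuous.continuousOn
  have hx₀_ne : x₀ ≠ 0 := ne_zero_of_mem_unit_sphere (x := ⟨x₀, hx₀⟩)
  refine ⟨f x₀, (hf.nonneg x₀).lt_of_ne (fun h => hx₀_ne ((hf.eq_zero_iff x₀).1 h.symm)),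
    fun x => ?_⟩
  rcases eq_or_ne x 0 with rfl | hx
  · simp [hf.map_zero]
  have hxpos : 0 < ‖x‖ := norm_pos_iff.2 hx
  have hle : f x₀ ≤ ‖x‖⁻¹ * f x := by
    rw [← hf.smul_of_nonneg (inv_nonneg.2 hxpos.le)]
    exact hmin (by simp [norm_smul, hx])
  calc f x₀ * ‖x‖ ≤ ‖x‖⁻¹ * f x * ‖x‖ := by gcongr
    _ = f x := by field_simp

lemma lt_one_of_mem_interior (hf : IsNormLike f) {y : Euc N}
    (hy : y ∈ interior {x | f x ≤ 1}) : f y < 1 := by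
  have hnear : ∀ᶠ t in 𝓝[>] (1 : ℝ), t • y ∈ {x | f x ≤ 1} := by
    refine nhdsWithin_le_nhds ((continuous_id.smul continuous_const).tendsto' 1 y ?_ ?_)
    · simp
    · exact mem_interior_iff_mem_nhds.1 hy
  obtain ⟨t, hty, ht⟩ := (hnear.and self_mem_nhdsWithin).exists
  have hty : t * f y ≤ 1 := by
    rw [← hf.smul_of_nonneg (zero_le_one.trans ht.le)]
    exact hty
  nlinarith [hf.nonneg y]

/-- Two distinct minimizers `v₁ ≠ v₂` at distance `m` from `u` would put the midpoint, which
lies in `C`, at distance `< m` from `u` by strict convexity of the unit ball. -/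
lemma eq_of_isMinOn_sub (hf : IsNormLike f) (hsc : StrictConvex ℝ {x | f x ≤ 1})
    {C : Set (Euc N)} (hC : Convex ℝ C) {u v₁ v₂ : Euc N} (hv₁ : v₁ ∈ C) (hv₂ : v₂ ∈ C)
    (h₁ : IsMinOn (fun v => f (v - u)) C v₁) (h₂ : IsMinOn (fun v => f (v - u)) C v₂) :
    v₁ = v₂ := by
  by_contra hne
  have heq : f (v₂ - u) = f (v₁ - u) := le_antisymm (h₂ hv₁) (h₁ hv₂)
  set m := f (v₁ - u)
  rcases (hf.nonneg (v₁ - u)).eq_or_lt with hm | hm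
  · have e₁ := (hf.eq_zero_iff _).1 hm.symm
    have e₂ := (hf.eq_zero_iff _).1 (heq.trans hm.symm)
    exact hne ((sub_eq_zero.1 e₁).trans (sub_eq_zero.1 e₂).symm)
  have hball : ∀ v, f (v - u) = m → m⁻¹ • (v - u) ∈ {x | f x ≤ 1} := fun v hv => by
    show f _ ≤ 1
    rw [hf.smul_of_nonneg (inv_nonneg.2 hm.le), hv, inv_mul_cancel₀ hm.ne']
  have hz : m⁻¹ • (v₁ - u) ≠ m⁻¹ • (v₂ - u) := fun h =>
    hne (sub_left_inj.1 (smul_right_injective _ (inv_ne_zero hm.ne') h))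
  have hmid := hf.lt_one_of_mem_interior <|
    hsc (hball v₁ rfl) (hball v₂ heq) hz (by norm_num : (0 : ℝ) < 1 / 2)
      (by norm_num : (0 : ℝ) < 1 / 2) (by norm_num)
  have hw : (1 / 2 : ℝ) • v₁ + (1 / 2 : ℝ) • v₂ - u
      = m • ((1 / 2 : ℝ) • m⁻¹ • (v₁ - u) + (1 / 2 : ℝ) • m⁻¹ • (v₂ - u)) := by
    rw [smul_add, smul_comm m (1 / 2 : ℝ), smul_comm m (1 / 2 : ℝ), smul_inv_smul₀ hm.ne',
      smul_inv_smul₀ hm.ne']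
    module
  have hmin : m ≤ f ((1 / 2 : ℝ) • v₁ + (1 / 2 : ℝ) • v₂ - u) :=
    h₁ (hC hv₁ hv₂ (by norm_num : (0 : ℝ) ≤ 1 / 2) (by norm_num : (0 : ℝ) ≤ 1 / 2) (by norm_num))
  rw [hw, hf.smul_of_nonneg hm.le] at hmin
  nlinarith

/-- If `v₀ ∈ C` is a closest point of `C` to `v₀ + x`, then it is also one to `v₀ + t • x`
for every `t > 0`: for `t ≤ 1` by the triangle inequality, for `t ≥ 1` by shrinking the
competitor `v` to `v₀ + t⁻¹ • (v - v₀) ∈ C`. -/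
lemma isMinOn_sub_add_smul (hf : IsNormLike f) {C : Set (Euc N)} (hC : Convex ℝ C)
    {v₀ x : Euc N} (hv₀ : v₀ ∈ C) (h : IsMinOn (fun v => f (v - (v₀ + x))) C v₀)
    {t : ℝ} (ht : 0 < t) : IsMinOn (fun v => f (v - (v₀ + t • x))) C v₀ := by
  have hx : ∀ v ∈ C, f x ≤ f (v - (v₀ + x)) := fun v hv => by
    simpa [hf.map_neg] using h hv
  intro v hv
  show f (v₀ - (v₀ + t • x)) ≤ f (v - (v₀ + t • x))
  rw [show v₀ - (v₀ + t • x) = t • (-x) by module, hf.smul_of_nonneg ht.le, hf.map_neg]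
  rcases le_total t 1 with ht1 | ht1
  · have htri := hf.add_le (v - (v₀ + t • x)) ((1 - t) • (-x))
    rw [show v - (v₀ + t • x) + (1 - t) • -x = v - (v₀ + x) by module,
      hf.smul_of_nonneg (by linarith), hf.map_neg] at htri
    linarith [hx v hv]
  · have hw : v₀ + t⁻¹ • (v - v₀) ∈ C := by
      convert hC hv₀ hv (sub_nonneg.2 (inv_le_one_of_one_le₀ ht1)) (inv_nonneg.2 ht.le)
        (by ring) using 1
      module
    have hscale : v - (v₀ + t • x) = t • (v₀ + t⁻¹ • (v - v₀) - (v₀ + x)) := by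
      rw [smul_sub, smul_add, smul_inv_smul₀ ht.ne']
      module
    rw [hscale, hf.smul_of_nonneg ht.le]
    exact mul_le_mul_of_nonneg_left (hx _ hw) ht.le

end IsNormLike

lemma convex_cube (ψ : Module.Basis (Fin N) ℝ (Euc N)) (τ : ℝ) (k : Fin N → ℤ) :
    Convex ℝ (cube ψ τ k) := by
  have hcube : cube ψ τ k
      = ⋂ i, ψ.coord i ⁻¹' Icc (τ * ((k i : ℝ) - 1 / 2)) (τ * ((k i : ℝ) + 1 / 2)) := by
    ext u
    simp [cube]
  rw [hcube]
  exact convex_iInter fun i => (convex_Icc _ _).linear_preimage (ψ.coord i)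

lemma IsSol.apply_add_smul_sub {ψ : Module.Basis (Fin N) ℝ (Euc N)} {τ : ℝ}
    {f : Euc N → ℝ} {sol : Euc N → Euc N} (hf : IsNormLike f)
    (hsc : StrictConvex ℝ {x | f x ≤ 1}) (hsol : IsSol ψ τ f sol) (u : Euc N) {t : ℝ}
    (ht : 0 < t) : sol (sol u + t • (u - sol u)) = sol u := by
  have hmin : IsMinOn (fun v => f (v - (sol u + (u - sol u)))) (cube0 ψ τ) (sol u) := by
    simpa using (hsol u).2
  exact hf.eq_of_isMinOn_sub hsc (convex_cube ψ τ 0) (hsol _).1 (hsol u).1 (hsol _).2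
    (hf.isMinOn_sub_add_smul (convex_cube ψ τ 0) (hsol u).1 hmin ht)

lemma mem_SSAT_singleton {sol : Euc N → Euc N} {fd : Euc N → ℝ} {c u : Euc N}
    {A : Set ℝ} : u ∈ SSAT sol fd {c} A ↔ sol u = c ∧ fd (u - c) ∈ A := by
  constructor <;> rintro ⟨rfl, h⟩ <;> exact ⟨rfl, h⟩

/-- The inverse of `(u, t) ↦ c + t • (u - c)` is `w ↦ (c + fd (w - c)⁻¹ • (w - c), fd (w - c))`. -/
lemma bijOn_SSAT_one_prod {sol : Euc N → Euc N} {fd : Euc N → ℝ} (hfd : IsNormLike fd)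
    (hray : ∀ u {t : ℝ}, 0 < t → sol (sol u + t • (u - sol u)) = sol u) (c : Euc N)
    {A : Set ℝ} (hA : A ⊆ Ioi 0) :
    BijOn (fun p : Euc N × ℝ => c + p.2 • (p.1 - c)) (SSAT sol fd {c} {1} ×ˢ A)
      (SSAT sol fd {c} A) := by
  have hfd_ray : ∀ {t : ℝ}, 0 < t → ∀ u, fd (c + t • (u - c) - c) = t * fd (u - c) :=
    fun ht u => by rw [add_sub_cancel_left, hfd.smul_of_nonneg ht.le]
  refine InvOn.bijOn (f' := fun w => (c + (fd (w - c))⁻¹ • (w - c), fd (w - c))) ⟨?_, ?_⟩ ?_ ?_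
  · rintro ⟨u, t⟩ ⟨hu, ht⟩
    obtain ⟨-, hu1⟩ := mem_SSAT_singleton.1 hu
    rw [mem_singleton_iff] at hu1
    dsimp only
    rw [hfd_ray (hA ht), hu1, mul_one, add_sub_cancel_left, inv_smul_smul₀ (hA ht).ne',
      add_sub_cancel]
  · rintro w hw
    have hs : fd (w - c) ≠ 0 := (hA (mem_SSAT_singleton.1 hw).2).ne'
    simp only [add_sub_cancel_left, smul_inv_smul₀ hs, add_sub_cancel]
  · rintro ⟨u, t⟩ ⟨hu, ht⟩
    obtain ⟨rfl, hu1⟩ := mem_SSAT_singleton.1 hu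
    rw [mem_singleton_iff] at hu1
    exact mem_SSAT_singleton.2 ⟨hray u (hA ht), by rw [hfd_ray (hA ht), hu1, mul_one]; exact ht⟩
  · rintro w hw
    obtain ⟨rfl, hs⟩ := mem_SSAT_singleton.1 hw
    have hs' : 0 < (fd (w - sol w))⁻¹ := inv_pos.2 (hA hs)
    refine ⟨mem_SSAT_singleton.2 ⟨hray w hs', ?_⟩, hs⟩
    rw [hfd_ray hs', inv_mul_cancel₀ (hA hs).ne', mem_singleton_iff]

lemma lipschitzOnWith_add_smul_sub {E : Type*} [SeminormedAddCommGroup E] [NormedSpace ℝ E]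
    (c : E) {S : Set E} {T : Set ℝ} {M R : NNReal} (hS : ∀ u ∈ S, ‖u - c‖ ≤ M)
    (hT : ∀ t ∈ T, |t| ≤ R) :
    LipschitzOnWith (R + M) (fun p : E × ℝ => c + p.2 • (p.1 - c)) (S ×ˢ T) := by
  refine LipschitzOnWith.of_dist_le_mul fun ⟨u₁, t₁⟩ ⟨_, ht₁⟩ ⟨u₂, t₂⟩ ⟨hu₂, _⟩ => ?_
  have hu : ‖u₁ - u₂‖ ≤ dist (u₁, t₁) (u₂, t₂) := by
    rw [Prod.dist_eq, ← dist_eq_norm]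
    exact le_max_left _ _
  have ht : |t₁ - t₂| ≤ dist (u₁, t₁) (u₂, t₂) := by
    rw [Prod.dist_eq, ← Real.dist_eq]
    exact le_max_right _ _
  calc dist (c + t₁ • (u₁ - c)) (c + t₂ • (u₂ - c))
      = ‖t₁ • (u₁ - u₂) + (t₁ - t₂) • (u₂ - c)‖ := by
        rw [dist_eq_norm]
        congr 1
        module
    _ ≤ |t₁| * ‖u₁ - u₂‖ + |t₁ - t₂| * ‖u₂ - c‖ := by
        grw [norm_add_le, norm_smul, norm_smul, Real.norm_eq_abs, Real.norm_eq_abs]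
    _ ≤ R * dist (u₁, t₁) (u₂, t₂) + dist (u₁, t₁) (u₂, t₂) * M := by
        gcongr
        exacts [hT t₁ ht₁, hS u₂ hu₂]
    _ = ↑(R + M) * dist (u₁, t₁) (u₂, t₂) := by push_cast; ring

theorem stmt5_general {N : ℕ} (ψ : Module.Basis (Fin N) ℝ (Euc N)) (τ : ℝ)
    (f : Euc N → ℝ) (hf : GoodNorm f)
    (fd : Euc N → ℝ) (hfd : IsNormLike fd)
    (sol : Euc N → Euc N) (hsol : IsSol ψ τ f sol)
    (τ' : ℝ)
    (uc : Euc N) :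
    Set.BijOn (fun p : Euc N × ℝ => uc + p.2 • (p.1 - uc))
        ((SSAT sol fd {uc} ({1} : Set ℝ)) ×ˢ Set.Ioc (0 : ℝ) τ')
        (SSAT sol fd {uc} (Set.Ioc 0 τ')) ∧
      ∃ L : NNReal, LipschitzOnWith L (fun p : Euc N × ℝ => uc + p.2 • (p.1 - uc))
        ((SSAT sol fd {uc} ({1} : Set ℝ)) ×ˢ Set.Ioc (0 : ℝ) τ') := by
  have hray := hsol.apply_add_smul_sub ⟨hf.add_le, hf.smul_eq, hf.eq_zero_iff⟩ hf.sconv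
  obtain ⟨c, hc, hlow⟩ := hfd.exists_pos_mul_norm_le
  have hbound : ∀ u ∈ SSAT sol fd {uc} {1}, ‖u - uc‖ ≤ c⁻¹.toNNReal := fun u hu => by
    obtain ⟨-, hu1⟩ := mem_SSAT_singleton.1 hu
    refine le_trans ?_ (Real.le_coe_toNNReal _)
    rw [← one_div, le_div_iff₀' hc, ← mem_singleton_iff.1 hu1]
    exact hlow _
  refine ⟨bijOn_SSAT_one_prod hfd hray uc fun t ht => ht.1, _,
    lipschitzOnWith_add_smul_sub uc hbound (R := τ'.toNNReal) fun t ht => ?_⟩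
  rw [abs_of_pos ht.1]
  exact ht.2.trans (Real.le_coe_toNNReal _)

/-- for a face center `u^c`, the map `h'(u,λ) = u^c + λ(u - u^c)` is a
well-defined Lipschitz bijection from `SSAT({u^c},{1}) × (0,τ']` onto `SSAT({u^c},(0,τ'])`. -/
theorem stmt5 {N : ℕ} (hN : 1 ≤ N) (ψ : Module.Basis (Fin N) ℝ (Euc N)) (τ : ℝ) (hτ : 0 < τ)
    (f : Euc N → ℝ) (hf : GoodNorm f) (hcurved : Curved f)
    (fd : Euc N → ℝ) (hfd : IsNormLike fd)
    (sol : Euc N → Euc N) (hsol : IsSol ψ τ f sol)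
    (τ' : ℝ) (hτ' : 0 < τ')
    (uc : Euc N) (huc : uc ∈ frontier (cube0 ψ τ))
    (hucc : ∀ i, i ∉ Jset ψ τ uc → ψ.repr uc i = 0) :
    Set.BijOn (fun p : Euc N × ℝ => uc + p.2 • (p.1 - uc))
        ((SSAT sol fd {uc} ({1} : Set ℝ)) ×ˢ Set.Ioc (0 : ℝ) τ')
        (SSAT sol fd {uc} (Set.Ioc 0 τ')) ∧
      ∃ L : NNReal, LipschitzOnWith L (fun p : Euc N × ℝ => uc + p.2 • (p.1 - uc))
        ((SSAT sol fd {uc} ({1} : Set ℝ)) ×ˢ Set.Ioc (0 : ℝ) τ') :=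
  stmt5_general ψ τ f hf fd hfd sol hsol τ' uc
end
end

section
/- Assume f is curved and let τ' > 0. For every u* ∈ ∂C(0), writing u^c = Σ_{j∈J(u*)} u*_j ψ_j (where u* = Σ_{i∈I} u*_i ψ_i), the set SSAT({u*},(0,τ']) is nonempty, bounded, and equals the translate (u* − u^c) + SSAT({u^c},(0,τ']). -/
/-!
Strict convexity of the unit ball of `f` makes the minimiser of `f (· - u)` over the convex cube
unique, so `sol u` is identified by exhibiting any minimiser.

If `p` minimises `f (· - u)` over `C(0)` and `q ∈ C(0)` agrees with `p` on `J(p)`, then for every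
`v ∈ C(0)` the point `p + t (v - q)` stays in `C(0)` for small `t > 0` (inactive coordinates of `p`
have slack), and convexity of `f` shows that `q` minimises `f (· - (u + q - p))`. Since `u*` and
`u^c` agree on each other's active coordinates, this translates `SSAT({u^c}, A)` onto
`SSAT({u*}, A)`.

An active coordinate of `u*` gives a linear functional `L` maximised over `C(0)` at `u*`. If `w`
maximises `L` on the unit ball of `f`, then `L ≤ L(w) · f`, and `u*` minimises
`f (· - (u* + s w))` for every `s ≥ 0`; scaling `s` gives `f_d`-distance exactly `τ'`.
Boundedness holds because on a finite-dimensional space `f_d` dominates a multiple of the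
Euclidean norm.
-/

open MeasureTheory Filter Set
open scoped Classical

noncomputable section

variable {N : ℕ}

open Topology

theorem ConvexOn.le_add_of_isMinOn {E : Type*} [AddCommGroup E] [Module ℝ E] {g : E → ℝ}
    (hg : ConvexOn ℝ univ g) {K : Set E} {a d : E} (ha : IsMinOn g K a)
    (hd : ∃ t ∈ Ioc (0 : ℝ) 1, a + t • d ∈ K) : g a ≤ g (a + d) := by
  obtain ⟨t, ⟨ht0, ht1⟩, hK⟩ := hd
  have hconv := hg.2 (mem_univ a) (mem_univ (a + d)) (sub_nonneg.mpr ht1) ht0.le (by ring)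
  have hcomb : (1 - t) • a + t • (a + d) = a + t • d := by module
  rw [hcomb, smul_eq_mul, smul_eq_mul] at hconv
  have : g a ≤ g (a + t • d) := ha hK
  nlinarith

namespace Seminorm

section VectorSpace

variable {E : Type*} [AddCommGroup E] [Module ℝ E] (p : Seminorm ℝ E)

theorem isMinOn_sub_add_smul {K : Set E} {L : E →ₗ[ℝ] ℝ} {w a : E}
    (hw : p w ≤ 1) (hLw : 0 < L w) (hL : ∀ x, L x ≤ L w * p x) (ha : IsMaxOn L K a)
    {s : ℝ} (hs : 0 ≤ s) : IsMinOn (fun v => p (v - (a + s • w))) K a := by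
  intro v hv
  have hLv : L v ≤ L a := ha hv
  have key : L w * s ≤ L w * p (v - (a + s • w)) :=
    calc L w * s ≤ L (a + s • w - v) := by
          simp only [map_sub, map_add, map_smul, smul_eq_mul]; linarith
      _ ≤ L w * p (a + s • w - v) := hL _
      _ = L w * p (v - (a + s • w)) := by rw [← map_neg_eq_map p, neg_sub]
  show p (a - (a + s • w)) ≤ p (v - (a + s • w))
  rw [sub_add_cancel_left, map_neg_eq_map, map_smul_eq_mul, Real.norm_eq_abs, abs_of_nonneg hs]
  calc s * p w ≤ s := mul_le_of_le_one_right hs hw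
    _ ≤ p (v - (a + s • w)) := le_of_mul_le_mul_left key hLw

end VectorSpace

section Topological

variable {E : Type*} [AddCommGroup E] [Module ℝ E] [TopologicalSpace E] [ContinuousSMul ℝ E]
  (p : Seminorm ℝ E)

theorem lt_one_of_mem_interior {x : E} (hx : x ∈ interior {y | p y ≤ 1}) : p x < 1 := by
  have hle : p x ≤ 1 := (interior_subset hx : x ∈ {y | p y ≤ 1})
  refine hle.lt_of_ne fun hx1 => ?_
  have hlim : Tendsto (fun t : ℝ => t • x) (𝓝[>] 1) (𝓝 x) := by
    simpa using (tendsto_id.mono_left (nhdsWithin_le_nhds (a := (1 : ℝ)))).smul_const x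
  obtain ⟨t, ht, ht1⟩ :=
    ((hlim.eventually (isOpen_interior.mem_nhds hx)).and self_mem_nhdsWithin).exists
  have : p (t • x) ≤ 1 := (interior_subset ht : t • x ∈ {y | p y ≤ 1})
  rw [map_smul_eq_mul, hx1, Real.norm_eq_abs, abs_of_pos (zero_lt_one.trans ht1)] at this
  linarith

theorem eq_of_isMinOn_sub (hconv : StrictConvex ℝ {y | p y ≤ 1}) (hp : ∀ x, p x = 0 → x = 0)
    {K : Set E} (hK : Convex ℝ K) {u v₁ v₂ : E} (hv₁ : v₁ ∈ K) (hv₂ : v₂ ∈ K)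
    (h₁ : IsMinOn (fun v => p (v - u)) K v₁) (h₂ : IsMinOn (fun v => p (v - u)) K v₂) :
    v₁ = v₂ := by
  have hm : p (v₁ - u) = p (v₂ - u) := le_antisymm (h₁ hv₂) (h₂ hv₁)
  rcases (apply_nonneg p (v₁ - u)).eq_or_lt with hm0 | hm0
  · rw [sub_eq_zero.mp (hp _ hm0.symm), sub_eq_zero.mp (hp _ (hm.symm.trans hm0.symm))]
  set m := p (v₁ - u)
  by_contra hne
  have hunit : ∀ v, p (v - u) = m → p (m⁻¹ • (v - u)) ≤ 1 := fun v hv => by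
    rw [map_smul_eq_mul, hv, Real.norm_eq_abs, abs_of_pos (inv_pos.mpr hm0),
      inv_mul_cancel₀ hm0.ne']
  have hxy : m⁻¹ • (v₁ - u) ≠ m⁻¹ • (v₂ - u) := fun h =>
    hne (sub_left_injective (smul_right_injective E (inv_pos.mpr hm0).ne' h))
  have hmid := p.lt_one_of_mem_interior (hconv (hunit v₁ rfl) (hunit v₂ hm.symm) hxy
    one_half_pos one_half_pos (add_halves 1))
  have hmin : m ≤ p ((1 / 2 : ℝ) • v₁ + (1 / 2 : ℝ) • v₂ - u) :=
    h₁ (hK hv₁ hv₂ one_half_pos.le one_half_pos.le (add_halves 1))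
  have hmid_eq : (1 / 2 : ℝ) • m⁻¹ • (v₁ - u) + (1 / 2 : ℝ) • m⁻¹ • (v₂ - u)
      = m⁻¹ • ((1 / 2 : ℝ) • v₁ + (1 / 2 : ℝ) • v₂ - u) := by module
  rw [hmid_eq, map_smul_eq_mul, Real.norm_eq_abs, abs_of_pos (inv_pos.mpr hm0),
    inv_mul_lt_iff₀ hm0, mul_one] at hmid
  linarith

end Topological

section FiniteDimensional

variable {E : Type*} [NormedAddCommGroup E] [NormedSpace ℝ E] [FiniteDimensional ℝ E]
  (p : Seminorm ℝ E)

protected theorem continuous_of_finiteDimensional : Continuous p :=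
  continuousOn_univ.mp (p.convexOn.continuousOn isOpen_univ)

theorem exists_pos_mul_norm_le (hp : ∀ x, p x = 0 → x = 0) : ∃ c > 0, ∀ x, c * ‖x‖ ≤ p x := by
  rcases subsingleton_or_nontrivial E with hE | hE
  · exact ⟨1, one_pos, fun x => by simp [Subsingleton.elim x 0]⟩
  obtain ⟨z, hz, hzmin⟩ := (isCompact_sphere (0 : E) 1).exists_isMinOn
    (NormedSpace.sphere_nonempty.mpr zero_le_one) p.continuous_of_finiteDimensional.continuousOn
  have hz0 : z ≠ 0 := ne_zero_of_mem_unit_sphere ⟨z, hz⟩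
  refine ⟨p z, (apply_nonneg p z).lt_of_ne fun h => hz0 (hp z h.symm), fun x => ?_⟩
  rcases eq_or_ne x 0 with rfl | hx
  · simp
  have hnx : 0 < ‖x‖ := norm_pos_iff.mpr hx
  have hxs : ‖x‖⁻¹ • x ∈ Metric.sphere (0 : E) 1 := by
    simp [norm_smul, hnx.ne']
  have : p z ≤ p (‖x‖⁻¹ • x) := hzmin hxs
  rw [map_smul_eq_mul, norm_inv, norm_norm] at this
  rwa [le_inv_mul_iff₀ hnx, mul_comm] at this

theorem isBounded_closedBall (hp : ∀ x, p x = 0 → x = 0) (x : E) (r : ℝ) :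
    Bornology.IsBounded (p.closedBall x r) := by
  obtain ⟨c, hc, hcp⟩ := p.exists_pos_mul_norm_le hp
  refine (Metric.isBounded_closedBall (x := x) (r := r / c)).subset fun y hy => ?_
  rw [Metric.mem_closedBall, dist_eq_norm, le_div_iff₀ hc, mul_comm]
  exact (hcp _).trans (p.mem_closedBall.mp hy)

theorem exists_forall_le_mul (hp : ∀ x, p x = 0 → x = 0) {L : E →ₗ[ℝ] ℝ} (hL : L ≠ 0) :
    ∃ w, p w ≤ 1 ∧ 0 < L w ∧ ∀ x, L x ≤ L w * p x := by
  have hcpt : IsCompact (p.closedBall 0 1) :=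
    Metric.isCompact_of_isClosed_isBounded
      (isClosed_le (p.continuous_of_finiteDimensional.comp (continuous_sub_right 0))
        continuous_const) (p.isBounded_closedBall hp 0 1)
  obtain ⟨w, hw, hwmax⟩ :=
    hcpt.exists_isMaxOn ⟨0, by simp⟩ L.continuous_of_finiteDimensional.continuousOn
  have hle : ∀ x, L x ≤ L w * p x := fun x => by
    rcases (apply_nonneg p x).eq_or_lt with hx | hx
    · simp [hp x hx.symm]
    have hmem : (p x)⁻¹ • x ∈ p.closedBall 0 1 := by
      rw [mem_closedBall_zero, map_smul_eq_mul, Real.norm_eq_abs, abs_of_pos (inv_pos.mpr hx),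
        inv_mul_cancel₀ hx.ne']
    have : L ((p x)⁻¹ • x) ≤ L w := hwmax hmem
    rw [map_smul, smul_eq_mul] at this
    rwa [inv_mul_le_iff₀ hx, mul_comm] at this
  obtain ⟨y, hy⟩ : ∃ y, 0 < L y := by
    by_contra! h
    exact hL (LinearMap.ext fun y => le_antisymm (h y) (by simpa using h (-y)))
  have := hle y
  refine ⟨w, p.mem_closedBall_zero.mp hw, ?_, hle⟩
  nlinarith [apply_nonneg p y]

end FiniteDimensional

end Seminorm

theorem GoodNorm.isNormLike {f : Euc N → ℝ} (hf : GoodNorm f) : IsNormLike f :=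
  ⟨hf.add_le, hf.smul_eq, hf.eq_zero_iff⟩

namespace IsNormLike

variable {f : Euc N → ℝ}

def toSeminorm (hf : IsNormLike f) : Seminorm ℝ (Euc N) :=
  Seminorm.of f hf.add_le fun c x => by rw [hf.smul_eq, Real.norm_eq_abs]

@[simp]
theorem toSeminorm_apply (hf : IsNormLike f) (x : Euc N) : hf.toSeminorm x = f x := rfl

theorem eq_zero_of_toSeminorm_eq_zero (hf : IsNormLike f) (x : Euc N)
    (hx : hf.toSeminorm x = 0) : x = 0 :=
  (hf.eq_zero_iff x).mp hx

theorem pos (hf : IsNormLike f) {x : Euc N} (hx : x ≠ 0) : 0 < f x :=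
  (apply_nonneg hf.toSeminorm x).lt_of_ne fun h => hx (hf.eq_zero_of_toSeminorm_eq_zero x h.symm)

end IsNormLike

section Cube

variable {ψ : Module.Basis (Fin N) ℝ (Euc N)} {τ : ℝ}

theorem mem_cube0_iff {u : Euc N} :
    u ∈ cube0 ψ τ ↔ ∀ i, -(τ / 2) ≤ ψ.repr u i ∧ ψ.repr u i ≤ τ / 2 := by
  simp only [cube0, cube, mem_ofPred_eq, Pi.zero_apply, Int.cast_zero, zero_sub, zero_add]
  refine forall_congr' fun i => ?_
  constructor <;> rintro ⟨h₁, h₂⟩ <;> constructor <;> linarith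

theorem cube0_eq_preimage (ψ : Module.Basis (Fin N) ℝ (Euc N)) (τ : ℝ) :
    cube0 ψ τ = ψ.equivFun.toContinuousLinearEquiv ⁻¹' univ.pi fun _ => Icc (-(τ / 2)) (τ / 2) := by
  ext u
  simp only [mem_cube0_iff, mem_preimage, mem_univ_pi, mem_Icc,
    LinearEquiv.coe_toContinuousLinearEquiv', Module.Basis.equivFun_apply]

theorem isClosed_cube0 (ψ : Module.Basis (Fin N) ℝ (Euc N)) (τ : ℝ) : IsClosed (cube0 ψ τ) := by
  rw [cube0_eq_preimage]
  exact (isClosed_set_pi fun _ _ => isClosed_Icc).preimage (ContinuousLinearEquiv.continuous _)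

theorem convex_cube0 (ψ : Module.Basis (Fin N) ℝ (Euc N)) (τ : ℝ) : Convex ℝ (cube0 ψ τ) := by
  rw [cube0_eq_preimage]
  exact (convex_pi fun _ _ => convex_Icc _ _).linear_preimage ψ.equivFun.toLinearMap

theorem Jset_nonempty_of_mem_frontier {u : Euc N} (hu : u ∈ frontier (cube0 ψ τ)) :
    (Jset ψ τ u).Nonempty := by
  by_contra hJ
  have hu₀ : u ∈ cube0 ψ τ := (isClosed_cube0 ψ τ).frontier_subset hu
  refine hu.2 ?_
  rw [cube0_eq_preimage]
  refine preimage_interior_subset_interior_preimage (ContinuousLinearEquiv.continuous _) ?_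
  rw [interior_pi_set finite_univ]
  intro i _
  have hi : i ∉ Jset ψ τ u := fun hi => hJ ⟨i, hi⟩
  simp only [Jset, mem_ofPred_eq, not_or] at hi
  have := mem_cube0_iff.mp hu₀ i
  simp only [interior_Icc, LinearEquiv.coe_toContinuousLinearEquiv',
    Module.Basis.equivFun_apply, mem_Ioo]
  exact ⟨this.1.lt_of_ne (Ne.symm hi.2), this.2.lt_of_ne hi.1⟩

theorem repr_add_smul_sub (p v q : Euc N) (t : ℝ) (i : Fin N) :
    ψ.repr (p + t • (v - q)) i = ψ.repr p i + t * (ψ.repr v i - ψ.repr q i) := by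
  simp only [map_add, map_smul, map_sub, Finsupp.coe_add, Finsupp.coe_smul, Finsupp.coe_sub,
    Pi.add_apply, Pi.smul_apply, Pi.sub_apply, smul_eq_mul]

theorem exists_add_smul_sub_mem_cube0 {p q v : Euc N} (hp : p ∈ cube0 ψ τ) (hv : v ∈ cube0 ψ τ)
    (hq : ∀ j ∈ Jset ψ τ p, ψ.repr q j = ψ.repr p j) :
    ∃ t ∈ Ioc (0 : ℝ) 1, p + t • (v - q) ∈ cube0 ψ τ := by
  suffices ∀ᶠ t in 𝓝[>] (0 : ℝ), t ∈ Ioc 0 1 ∧ p + t • (v - q) ∈ cube0 ψ τ from this.exists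
  have hcoord : ∀ i, Tendsto (fun t : ℝ => ψ.repr p i + t * (ψ.repr v i - ψ.repr q i))
      (𝓝[>] 0) (𝓝 (ψ.repr p i)) := fun i => by
    simpa using ((tendsto_id.mono_left (nhdsWithin_le_nhds (a := (0 : ℝ)))).mul_const
      (ψ.repr v i - ψ.repr q i)).const_add (ψ.repr p i)
  have hall : ∀ i, ∀ᶠ t in 𝓝[>] (0 : ℝ), t ∈ Ioc 0 1 →
      -(τ / 2) ≤ ψ.repr p i + t * (ψ.repr v i - ψ.repr q i) ∧
        ψ.repr p i + t * (ψ.repr v i - ψ.repr q i) ≤ τ / 2 := by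
    intro i
    have hpi := mem_cube0_iff.mp hp i
    have hvi := mem_cube0_iff.mp hv i
    by_cases hi : i ∈ Jset ψ τ p
    · refine Eventually.of_forall fun t ⟨ht₀, ht₁⟩ => ?_
      rw [hq i hi]
      constructor <;> nlinarith
    · simp only [Jset, mem_ofPred_eq, not_or] at hi
      filter_upwards [(hcoord i).eventually_const_lt (hpi.1.lt_of_ne (Ne.symm hi.2)),
        (hcoord i).eventually_lt_const (hpi.2.lt_of_ne hi.1)] with t h₁ h₂ _
      exact ⟨h₁.le, h₂.le⟩
  filter_upwards [Ioc_mem_nhdsGT one_pos, eventually_all.mpr hall] with t ht hcube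
  refine ⟨ht, mem_cube0_iff.mpr fun i => ?_⟩
  rw [repr_add_smul_sub]
  exact hcube i ht

theorem exists_isMaxOn_cube0 {p : Euc N} {i : Fin N} (hi : i ∈ Jset ψ τ p) :
    ∃ L : Euc N →ₗ[ℝ] ℝ, L ≠ 0 ∧ IsMaxOn L (cube0 ψ τ) p := by
  rcases hi with hi | hi
  · refine ⟨ψ.coord i, fun h => by simpa using LinearMap.congr_fun h (ψ i), fun v hv => ?_⟩
    simpa [hi] using (mem_cube0_iff.mp hv i).2
  · refine ⟨-ψ.coord i, fun h => by simpa using LinearMap.congr_fun h (ψ i), fun v hv => ?_⟩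
    simpa [hi, neg_le] using (mem_cube0_iff.mp hv i).1

theorem repr_ucOf (u : Euc N) (i : Fin N) :
    ψ.repr (ucOf ψ τ u) i = if i ∈ Jset ψ τ u then ψ.repr u i else 0 := by
  unfold ucOf pJ
  have : ∑ j, (if j ∈ Jset ψ τ u then ψ.repr u j • ψ j else 0) =
      ∑ j, (if j ∈ Jset ψ τ u then ψ.repr u j else 0) • ψ j :=
    Finset.sum_congr rfl fun j _ => by rw [ite_smul, zero_smul]
  rw [this, ψ.repr_sum_self]

theorem ucOf_mem_cube0 {u : Euc N} (hu : u ∈ cube0 ψ τ) : ucOf ψ τ u ∈ cube0 ψ τ := by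
  refine mem_cube0_iff.mpr fun i => ?_
  have hui := mem_cube0_iff.mp hu i
  rw [repr_ucOf]
  split_ifs
  · exact hui
  · constructor <;> linarith

theorem repr_ucOf_of_mem_Jset {u : Euc N} {i : Fin N} (hi : i ∈ Jset ψ τ u) :
    ψ.repr (ucOf ψ τ u) i = ψ.repr u i := by
  rw [repr_ucOf, if_pos hi]

theorem repr_eq_of_mem_Jset_ucOf {u : Euc N} (hu : u ∈ cube0 ψ τ) {i : Fin N}
    (hi : i ∈ Jset ψ τ (ucOf ψ τ u)) : ψ.repr u i = ψ.repr (ucOf ψ τ u) i := by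
  by_cases hiu : i ∈ Jset ψ τ u
  · exact (repr_ucOf_of_mem_Jset hiu).symm
  have hui := mem_cube0_iff.mp hu i
  have hi' : ψ.repr (ucOf ψ τ u) i = τ / 2 ∨ ψ.repr (ucOf ψ τ u) i = -(τ / 2) := hi
  rw [repr_ucOf, if_neg hiu] at hi' ⊢
  rcases hi' with hi' | hi' <;> linarith

end Cube

namespace IsSol

variable {ψ : Module.Basis (Fin N) ℝ (Euc N)} {τ : ℝ} {f : Euc N → ℝ} {sol : Euc N → Euc N}

theorem eq_of_isMinOn (hf : GoodNorm f) (hsol : IsSol ψ τ f sol) {u v : Euc N}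
    (hv : v ∈ cube0 ψ τ) (hmin : IsMinOn (fun w => f (w - u)) (cube0 ψ τ) v) : sol u = v :=
  hf.isNormLike.toSeminorm.eq_of_isMinOn_sub hf.sconv
    hf.isNormLike.eq_zero_of_toSeminorm_eq_zero (convex_cube0 ψ τ) (hsol u).1 hv
    (hsol u).2 hmin

theorem apply_add_sub (hf : GoodNorm f) (hsol : IsSol ψ τ f sol) {u q : Euc N}
    (hq : q ∈ cube0 ψ τ) (hqJ : ∀ j ∈ Jset ψ τ (sol u), ψ.repr q j = ψ.repr (sol u) j) :
    sol (u + (q - sol u)) = q := by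
  refine hsol.eq_of_isMinOn hf hq fun v hv => ?_
  have hconv : ConvexOn ℝ univ fun w => f (w - u) := by
    simpa [Function.comp_def, neg_add_eq_sub] using
      hf.isNormLike.toSeminorm.convexOn.translate_right (-u)
  have := hconv.le_add_of_isMinOn (hsol u).2 (exists_add_smul_sub_mem_cube0 (hsol u).1 hv hqJ)
  show f (q - (u + (q - sol u))) ≤ f (v - (u + (q - sol u)))
  convert this using 2 <;> abel

end IsSol

section SSAT

variable {ψ : Module.Basis (Fin N) ℝ (Euc N)} {τ : ℝ} {f fd : Euc N → ℝ} {sol : Euc N → Euc N}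

theorem SSAT_singleton_eq_image_add (hf : GoodNorm f) (hsol : IsSol ψ τ f sol) {p q : Euc N}
    (hp : p ∈ cube0 ψ τ) (hq : q ∈ cube0 ψ τ) (hpq : ∀ j ∈ Jset ψ τ p, ψ.repr q j = ψ.repr p j)
    (hqp : ∀ j ∈ Jset ψ τ q, ψ.repr p j = ψ.repr q j) (A : Set ℝ) :
    SSAT sol fd {p} A = (fun x => (p - q) + x) '' SSAT sol fd {q} A := by
  ext u
  simp only [SSAT, mem_image, mem_ofPred_eq, mem_singleton_iff]
  constructor
  · rintro ⟨hu, hA⟩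
    subst hu
    have hq' := hsol.apply_add_sub hf hq hpq
    refine ⟨u + (q - sol u), ⟨hq', ?_⟩, by abel⟩
    rw [hq']
    convert hA using 2
    abel
  · rintro ⟨w, ⟨hw, hA⟩, rfl⟩
    subst hw
    have hp' := hsol.apply_add_sub hf hp hqp
    rw [add_comm] at hp'
    refine ⟨hp', ?_⟩
    rw [hp']
    convert hA using 2
    abel

theorem SSAT_singleton_Ioc_nonempty (hf : GoodNorm f) (hsol : IsSol ψ τ f sol)
    (hfd : IsNormLike fd) {τ' : ℝ} (hτ' : 0 < τ') {p : Euc N} (hp : p ∈ cube0 ψ τ)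
    (hJ : (Jset ψ τ p).Nonempty) : (SSAT sol fd {p} (Ioc 0 τ')).Nonempty := by
  obtain ⟨i, hi⟩ := hJ
  obtain ⟨L, hL, hLmax⟩ := exists_isMaxOn_cube0 hi
  set P := hf.isNormLike.toSeminorm
  obtain ⟨w, hw, hLw, hLP⟩ :=
    P.exists_forall_le_mul hf.isNormLike.eq_zero_of_toSeminorm_eq_zero hL
  have hfdw : 0 < fd w := hfd.pos fun hw0 => by simp [hw0] at hLw
  set s := τ' / fd w
  have hs : 0 < s := div_pos hτ' hfdw
  have hsol_eq : sol (p + s • w) = p :=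
    hsol.eq_of_isMinOn hf hp (P.isMinOn_sub_add_smul hw hLw hLP hLmax hs.le)
  refine ⟨p + s • w, hsol_eq, ?_⟩
  rw [hsol_eq, add_sub_cancel_left, hfd.smul_eq, abs_of_pos hs, div_mul_cancel₀ _ hfdw.ne']
  exact ⟨hτ', le_rfl⟩

theorem isBounded_SSAT_singleton (hfd : IsNormLike fd) (p : Euc N) {A : Set ℝ}
    (hA : BddAbove A) : Bornology.IsBounded (SSAT sol fd {p} A) := by
  obtain ⟨r, hr⟩ := hA
  refine (hfd.toSeminorm.isBounded_closedBall hfd.eq_zero_of_toSeminorm_eq_zero p r).subset ?_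
  rintro u ⟨hu, huA⟩
  rw [mem_singleton_iff] at hu
  rw [Seminorm.mem_closedBall, IsNormLike.toSeminorm_apply, ← hu]
  exact hr huA

end SSAT

theorem stmt6_general {N : ℕ} (ψ : Module.Basis (Fin N) ℝ (Euc N)) (τ : ℝ)
    (f : Euc N → ℝ) (hf : GoodNorm f)
    (fd : Euc N → ℝ) (hfd : IsNormLike fd)
    (sol : Euc N → Euc N) (hsol : IsSol ψ τ f sol)
    (τ' : ℝ) (hτ' : 0 < τ')
    (us : Euc N) (hus : us ∈ frontier (cube0 ψ τ)) :
    (SSAT sol fd {us} (Set.Ioc 0 τ')).Nonempty ∧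
      Bornology.IsBounded (SSAT sol fd {us} (Set.Ioc 0 τ')) ∧
      SSAT sol fd {us} (Set.Ioc 0 τ') =
        (fun x => (us - ucOf ψ τ us) + x) '' SSAT sol fd {ucOf ψ τ us} (Set.Ioc 0 τ') := by
  have hus₀ : us ∈ cube0 ψ τ := (isClosed_cube0 ψ τ).frontier_subset hus
  refine ⟨SSAT_singleton_Ioc_nonempty hf hsol hfd hτ' hus₀ (Jset_nonempty_of_mem_frontier hus),
    isBounded_SSAT_singleton hfd us bddAbove_Ioc, ?_⟩
  exact SSAT_singleton_eq_image_add hf hsol hus₀ (ucOf_mem_cube0 hus₀)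
    (fun _ => repr_ucOf_of_mem_Jset) (fun _ => repr_eq_of_mem_Jset_ucOf hus₀) _

/-- `SSAT({u*},(0,τ'])` is nonempty, bounded, and is the translate by
`u* - u^c` of `SSAT({u^c},(0,τ'])`, where `u^c` is the center of the face of `u*`. -/
theorem stmt6 {N : ℕ} (hN : 1 ≤ N) (ψ : Module.Basis (Fin N) ℝ (Euc N)) (τ : ℝ) (hτ : 0 < τ)
    (f : Euc N → ℝ) (hf : GoodNorm f) (hcurved : Curved f)
    (fd : Euc N → ℝ) (hfd : IsNormLike fd)
    (sol : Euc N → Euc N) (hsol : IsSol ψ τ f sol)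
    (τ' : ℝ) (hτ' : 0 < τ')
    (us : Euc N) (hus : us ∈ frontier (cube0 ψ τ)) :
    (SSAT sol fd {us} (Set.Ioc 0 τ')).Nonempty ∧
      Bornology.IsBounded (SSAT sol fd {us} (Set.Ioc 0 τ')) ∧
      SSAT sol fd {us} (Set.Ioc 0 τ') =
        (fun x => (us - ucOf ψ τ us) + x) '' SSAT sol fd {ucOf ψ τ us} (Set.Ioc 0 τ') :=
  stmt6_general ψ τ f hf fd hfd sol hsol τ' hτ' us hus
end
end
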